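/- arXiv:1203.3072 — 8 statements merged into one kernel-verified Lean document; each statement's English description precedes it below -/
import Mathlib

section
/- Let (E, L, B) be a weakly left-resolving labelled space with the property that r(A \ B, a) ⊆ r(A, a) \ r(B, a) for all A, B ∈ B and all letters a in the alphabet. Then (E, L, B) is regular: whenever A, B ∈ B satisfy that L(A E^1) = L(B E^1) is finite, A and B contain no sinks, and r(A, a) = r(B, a) for all a ∈ L(A E^1), it follows that A = B. -/
/-- A labelled graph: a directed graph with source, range maps and a labelling of edges. -/
structure LabelledGraph (V E A : Type*) where
  src : E → V
  rng : E → V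
  lab : E → A

namespace LabelledGraph

variable {V E A : Type*}

/-- `es` is a (nonempty, composable) path of edges. -/
def IsPath (G : LabelledGraph V E A) (es : List E) : Prop :=
  es ≠ [] ∧ es.Chain' (fun e f => G.rng e = G.src f)

/-- The relative range `r(S, α)`: ranges of paths labelled `α` whose source lies in `S`. -/
def relRange (G : LabelledGraph V E A) (S : Set V) (α : List A) : Set V :=
  { w | ∃ es : List E, G.IsPath es ∧ es.map G.lab = α ∧
        (∀ e ∈ es.head?, G.src e ∈ S) ∧ ∃ e ∈ es.getLast?, G.rng e = w }

/-- `α` is a labelled path if it is the label of some path in the graph. -/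
def IsLabelledPath (G : LabelledGraph V E A) (α : List A) : Prop :=
  (G.relRange Set.univ α).Nonempty

/-- The graph is left-resolving: the labelling is injective on edges into each vertex. -/
def LeftResolving (G : LabelledGraph V E A) : Prop :=
  ∀ e f : E, G.rng e = G.rng f → G.lab e = G.lab f → e = f

/-- `L(S E¹)`, the set of labels of edges emitted from `S`. -/
def labelsFrom (G : LabelledGraph V E A) (S : Set V) : Set A :=
  G.lab '' (G.src ⁻¹' S)

/-- A sink: a vertex emitting no edges. -/
def IsSink (G : LabelledGraph V E A) (v : V) : Prop := ∀ e : E, G.src e ≠ v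

/-- `𝓑` is accommodating for `G`. -/
def Accommodating (G : LabelledGraph V E A) (𝓑 : Set (Set V)) : Prop :=
  (∀ S ∈ 𝓑, ∀ α : List A, G.IsLabelledPath α → G.relRange S α ∈ 𝓑) ∧
  (∀ α : List A, G.IsLabelledPath α → G.relRange Set.univ α ∈ 𝓑) ∧
  (∀ S ∈ 𝓑, ∀ T ∈ 𝓑, S ∩ T ∈ 𝓑) ∧
  (∀ S ∈ 𝓑, ∀ T ∈ 𝓑, S ∪ T ∈ 𝓑)

/-- The labelled space `(E, L, 𝓑)` is weakly left-resolving. -/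
def WeaklyLeftResolving (G : LabelledGraph V E A) (𝓑 : Set (Set V)) : Prop :=
  ∀ S ∈ 𝓑, ∀ T ∈ 𝓑, ∀ α : List A, G.IsLabelledPath α →
    G.relRange (S ∩ T) α = G.relRange S α ∩ G.relRange T α

/-- The labelled space `(E, L, 𝓑)` is regular. -/
def Regular (G : LabelledGraph V E A) (𝓑 : Set (Set V)) : Prop :=
  ∀ S ∈ 𝓑, ∀ T ∈ 𝓑,
    G.labelsFrom S = G.labelsFrom T → (G.labelsFrom S).Finite →
    (∀ v ∈ S, ¬ G.IsSink v) → (∀ v ∈ T, ¬ G.IsSink v) →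
    (∀ a ∈ G.labelsFrom S, G.relRange S [a] = G.relRange T [a]) →
    S = T

end LabelledGraph

namespace LabelledGraph

variable {V E A : Type*} (G : LabelledGraph V E A)

theorem rng_mem_relRange_singleton {U : Set V} {e : E} (he : G.src e ∈ U) :
    G.rng e ∈ G.relRange U [G.lab e] :=
  ⟨[e], ⟨List.cons_ne_nil e [], List.isChain_singleton e⟩, rfl, by simpa using he, e, rfl, rfl⟩

theorem lab_mem_labelsFrom {U : Set V} {e : E} (he : G.src e ∈ U) :
    G.lab e ∈ G.labelsFrom U :=
  ⟨e, he, rfl⟩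

/-- A vertex `v ∈ S \ T` emits some edge `e`; then `r(e)` lies in `r(S \ T, L(e))`, hence outside
`r(T, L(e)) ⊇ r(S, L(e)) ∋ r(e)`. -/
theorem subset_of_relRange_subset {S T : Set V}
    (hdiff : ∀ a, G.relRange (S \ T) [a] ⊆ G.relRange S [a] \ G.relRange T [a])
    (hsink : ∀ v ∈ S, ¬ G.IsSink v)
    (hrange : ∀ a ∈ G.labelsFrom S, G.relRange S [a] ⊆ G.relRange T [a]) :
    S ⊆ T := by
  intro v hv
  by_contra hvT
  obtain ⟨e, rfl⟩ : ∃ e, G.src e = v := by simpa [IsSink] using hsink v hv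
  obtain ⟨hS, hT⟩ := hdiff (G.lab e) (G.rng_mem_relRange_singleton ⟨hv, hvT⟩)
  exact hT (hrange _ (G.lab_mem_labelsFrom hv) hS)

end LabelledGraph

theorem stmt2_general {V E A : Type*} (G : LabelledGraph V E A) (𝓑 : Set (Set V))
    (hsub : ∀ S ∈ 𝓑, ∀ T ∈ 𝓑, ∀ a : A,
      G.relRange (S \ T) [a] ⊆ G.relRange S [a] \ G.relRange T [a]) :
    G.Regular 𝓑 := by
  intro S hS T hT hlab _ hsinkS hsinkT hrange
  refine Set.Subset.antisymm ?_ ?_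
  · exact G.subset_of_relRange_subset (hsub S hS T hT) hsinkS fun a ha => (hrange a ha).le
  · refine G.subset_of_relRange_subset (hsub T hT S hS) hsinkT fun a ha => (hrange a ?_).ge
    rwa [hlab]

theorem stmt2 {V E A : Type*} (G : LabelledGraph V E A) (𝓑 : Set (Set V))
    (hacc : G.Accommodating 𝓑) (hwlr : G.WeaklyLeftResolving 𝓑)
    (hsub : ∀ S ∈ 𝓑, ∀ T ∈ 𝓑, ∀ a : A,
      G.relRange (S \ T) [a] ⊆ G.relRange S [a] \ G.relRange T [a]) :
    G.Regular 𝓑 :=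
  stmt2_general G 𝓑 hsub
end

section
/- Let (E, L) be a left-resolving labelled graph and let B be an accommodating collection of subsets of E^0. Then B̃, the collection of finite disjoint unions of sets of the form A \ B with A ∈ B, B ∈ B ∪ {∅}, B ⊆ A, is again accommodating for (E, L): it is closed under relative ranges, contains r(α) for all labelled paths α, and is closed under finite intersections and unions. -/
/-- `𝓑^`: the collection of relative complements `S \ T` with `T ∈ 𝓑 ∪ {∅}`, `T ⊆ S`. -/
def hatSet {V : Type*} (𝓑 : Set (Set V)) : Set (Set V) :=
  { D | ∃ S ∈ 𝓑, ∃ T : Set V, (T ∈ 𝓑 ∨ T = ∅) ∧ T ⊆ S ∧ D = S \ T }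

/-- `𝓑~`: the collection of finite disjoint unions of members of `𝓑^`. -/
def tildeSet {V : Type*} (𝓑 : Set (Set V)) : Set (Set V) :=
  { D | ∃ F : Finset (Set V), (↑F : Set (Set V)) ⊆ hatSet 𝓑 ∧
        (↑F : Set (Set V)).Pairwise Disjoint ∧ D = ⋃₀ ↑F }

/-!
In a left-resolving graph a path is determined by its label and its range, so `r(·, α)`
preserves finite unions and relative complements. Since `𝓑 ∪ {∅}` is a lattice of sets, the
differences of its members form a semiring of sets, and `𝓑~` is the ring of sets it generates
(the finite unions of such differences). Hence `𝓑~` is closed under `∩` and `∪`, and `r(·, α)`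
maps it into itself because it maps differences of members of `𝓑 ∪ {∅}` to such differences.
-/

open MeasureTheory Set

section SetAlgebra

theorem IsSublattice.insert_bot {β : Type*} [Lattice β] [OrderBot β] {s : Set β}
    (hs : IsSublattice s) : IsSublattice (insert ⊥ s) :=
  ⟨hs.supClosed.insert_lowerBounds fun _ _ => bot_le,
    hs.infClosed.insert_lowerBounds fun _ _ => bot_le⟩

variable {α : Type*}

theorem isSetSemiring_image2_sdiff {L : Set (Set α)} (hL : IsSublattice L) (hempty : ∅ ∈ L) :
    IsSetSemiring (image2 (· \ ·) L L) where
  empty_mem := ⟨∅, hempty, ∅, hempty, Set.sdiff_self⟩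
  inter_mem := by
    rintro _ ⟨S, hS, T, hT, rfl⟩ _ ⟨S', hS', T', hT', rfl⟩
    refine ⟨S ∩ S', hL.infClosed hS hS', T ∪ T', hL.supClosed hT hT', ?_⟩
    ext; simp only [mem_inter_iff, mem_sdiff, mem_union]; tauto
  sdiff_eq_sUnion' := by
    classical
    rintro _ ⟨S, hS, T, hT, rfl⟩ _ ⟨S', hS', T', hT', rfl⟩
    -- split according to whether a point of `S \ T` avoids `S'` or lies in `S' ∩ T'`
    refine ⟨{S \ (T ∪ S'), (S ∩ S' ∩ T') \ T}, ?_, ?_, ?_⟩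
    · simp only [Finset.coe_insert, Finset.coe_singleton, insert_subset_iff,
        singleton_subset_iff]
      exact ⟨⟨S, hS, _, hL.supClosed hT hS', rfl⟩,
        ⟨_, hL.infClosed (hL.infClosed hS hS') hT', T, hT, rfl⟩⟩
    · simp only [Finset.coe_insert, Finset.coe_singleton]
      exact pairwise_pair_of_symm.mpr fun _ =>
        disjoint_left.mpr fun _ hx hx' => hx.2 (Or.inr hx'.1.1.2)
    · ext x
      simp only [Finset.coe_insert, Finset.coe_singleton, sUnion_insert, sUnion_singleton,
        mem_sdiff, mem_union, mem_inter_iff]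
      tauto

variable {𝓑 : Set (Set α)}

theorem sdiff_mem_hatSet (h𝓑 : InfClosed 𝓑) {S T : Set α} (hS : S ∈ 𝓑) (hT : T ∈ insert ∅ 𝓑) :
    S \ T ∈ hatSet 𝓑 := by
  refine ⟨S, hS, T ∩ S, ?_, inter_subset_right, sdiff_inter_self_eq_sdiff.symm⟩
  rcases hT with rfl | hT
  · exact Or.inr (empty_inter S)
  · exact Or.inl (h𝓑 hT hS)

theorem tildeSet_eq_supClosure (h𝓑 : IsSublattice 𝓑) :
    tildeSet 𝓑 = supClosure (image2 (· \ ·) (insert ∅ 𝓑) (insert ∅ 𝓑)) := by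
  have hsemiring : IsSetSemiring (image2 (· \ ·) (insert ∅ 𝓑) (insert ∅ 𝓑)) :=
    isSetSemiring_image2_sdiff h𝓑.insert_bot (mem_insert ∅ 𝓑)
  ext D
  constructor
  · rintro ⟨F, hF, -, rfl⟩
    rw [← sSup_eq_sUnion]
    refine supClosed_supClosure.sSup_mem F.finite_toSet (subset_supClosure hsemiring.empty_mem)
      fun p hp => subset_supClosure ?_
    obtain ⟨S, hS, T, hT, -, rfl⟩ := hF hp
    exact ⟨S, mem_insert_of_mem ∅ hS, T, hT.symm, rfl⟩
  · rw [hsemiring.mem_supClosure_iff]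
    rintro ⟨P, hP⟩
    refine ⟨P.parts, fun p hp => ?_, P.disjoint, ?_⟩
    · obtain ⟨S, hS, T, hT, rfl⟩ := hP hp
      rcases hS with rfl | hS
      · exact absurd (empty_sdiff T) (P.ne_bot hp)
      · exact sdiff_mem_hatSet h𝓑.infClosed hS hT
    · rw [← sSup_eq_sUnion, ← Finset.sup_id_eq_sSup, P.sup_parts]

theorem isSetRing_tildeSet (h𝓑 : IsSublattice 𝓑) : IsSetRing (tildeSet 𝓑) := by
  rw [tildeSet_eq_supClosure h𝓑]
  exact (isSetSemiring_image2_sdiff h𝓑.insert_bot (mem_insert ∅ 𝓑)).isSetRing_supClosure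

theorem subset_tildeSet : 𝓑 ⊆ tildeSet 𝓑 := by
  classical
  intro S hS
  have hS' : S ∈ hatSet 𝓑 := ⟨S, hS, ∅, .inr rfl, empty_subset S, sdiff_empty.symm⟩
  exact ⟨{S}, by simpa using hS', by simp, by simp⟩

end SetAlgebra

namespace LabelledGraph

variable {V E A : Type*} (G : LabelledGraph V E A)

theorem relRange_mono {S T : Set V} (h : S ⊆ T) (α : List A) :
    G.relRange S α ⊆ G.relRange T α :=
  fun _ ⟨es, hes, hlab, hsrc, hw⟩ => ⟨es, hes, hlab, fun e he => h (hsrc e he), hw⟩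

theorem relRange_empty (α : List A) : G.relRange ∅ α = ∅ :=
  eq_empty_of_forall_notMem fun _ ⟨es, hes, _, hsrc, _⟩ =>
    hsrc (es.head hes.1) (List.head?_eq_some_head hes.1)

theorem relRange_union (S T : Set V) (α : List A) :
    G.relRange (S ∪ T) α = G.relRange S α ∪ G.relRange T α := by
  refine (union_subset (G.relRange_mono subset_union_left α)
    (G.relRange_mono subset_union_right α)).antisymm' ?_
  rintro w ⟨es, hes, hlab, hsrc, hw⟩
  have hhead := List.head?_eq_some_head hes.1
  rcases hsrc _ hhead with h | h
  · exact .inl ⟨es, hes, hlab, fun e he => Option.mem_unique hhead he ▸ h, hw⟩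
  · exact .inr ⟨es, hes, hlab, fun e he => Option.mem_unique hhead he ▸ h, hw⟩

theorem relRange_sdiff_subset (S T : Set V) (α : List A) :
    G.relRange S α \ G.relRange T α ⊆ G.relRange (S \ T) α :=
  fun _ ⟨⟨es, hes, hlab, hsrc, hw⟩, hwT⟩ => ⟨es, hes, hlab,
    fun e he => ⟨hsrc e he, fun heT =>
      hwT ⟨es, hes, hlab, fun _ hf => Option.mem_unique he hf ▸ heT, hw⟩⟩, hw⟩

def relRangeSupHom (α : List A) : SupHom (Set V) (Set V) where
  toFun S := G.relRange S α
  map_sup' S T := G.relRange_union S T α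

theorem relRangeSupHom_apply (α : List A) (S : Set V) :
    G.relRangeSupHom α S = G.relRange S α :=
  rfl

variable {G}

theorem LeftResolving.eq_of_map_lab_eq (hG : G.LeftResolving)
    {es fs : List E} {w : V} (hes : es.IsChain fun e f => G.rng e = G.src f)
    (hfs : fs.IsChain fun e f => G.rng e = G.src f) (hlab : es.map G.lab = fs.map G.lab)
    (hesw : ∀ e ∈ es.getLast?, G.rng e = w) (hfsw : ∀ f ∈ fs.getLast?, G.rng f = w) :
    es = fs := by
  induction es using List.reverseRecOn generalizing fs w with
  | nil => exact (List.map_eq_nil_iff.mp hlab.symm).symm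
  | append_singleton es e ih =>
    obtain rfl | ⟨fs, f, rfl⟩ := fs.eq_nil_or_concat'
    · simp at hlab
    simp only [List.map_append, List.map_singleton] at hlab
    obtain ⟨hlab_init, hlab_last⟩ := List.append_inj' hlab rfl
    simp only [List.getLast?_append, List.getLast?_singleton, Option.some_or,
      Option.mem_def, Option.some.injEq, forall_eq'] at hesw hfsw
    obtain rfl : e = f := hG e f (hesw.trans hfsw.symm) (by simpa using hlab_last)
    obtain ⟨hes, -, hese⟩ := List.isChain_append.mp hes
    obtain ⟨hfs, -, hfse⟩ := List.isChain_append.mp hfs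
    -- both prefixes end at the source of the common last edge
    rw [ih hes hfs hlab_init (fun x hx => hese x hx e rfl) (fun y hy => hfse y hy e rfl)]

theorem LeftResolving.relRange_sdiff (hG : G.LeftResolving) (S T : Set V) (α : List A) :
    G.relRange (S \ T) α = G.relRange S α \ G.relRange T α := by
  refine subset_antisymm (fun w hw => ⟨G.relRange_mono sdiff_subset α hw, ?_⟩)
    (G.relRange_sdiff_subset S T α)
  obtain ⟨es, hes, hlab, hsrc, e, he, rfl⟩ := hw
  rintro ⟨fs, hfs, hlab', hsrc', f, hf, hfw⟩
  obtain rfl : es = fs := hG.eq_of_map_lab_eq hes.2 hfs.2 (hlab.trans hlab'.symm)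
    (fun x hx => by rw [Option.mem_unique hx he]) (fun y hy => by rw [Option.mem_unique hy hf, hfw])
  have hhead := List.head?_eq_some_head hes.1
  exact (hsrc _ hhead).2 (hsrc' _ hhead)

theorem LeftResolving.relRange_mem_tildeSet (hG : G.LeftResolving) {𝓑 : Set (Set V)}
    (h𝓑 : IsSublattice 𝓑) {α : List A} (hα : ∀ S ∈ 𝓑, G.relRange S α ∈ 𝓑) {X : Set V}
    (hX : X ∈ tildeSet 𝓑) : G.relRange X α ∈ tildeSet 𝓑 := by
  have hα₀ : ∀ S ∈ insert ∅ 𝓑, G.relRange S α ∈ insert ∅ 𝓑 := by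
    rintro S (rfl | hS)
    · exact .inl (G.relRange_empty α)
    · exact .inr (hα S hS)
  rw [tildeSet_eq_supClosure h𝓑] at hX ⊢
  refine supClosure_min ?_ (supClosed_supClosure.preimage (G.relRangeSupHom α)) hX
  rintro _ ⟨S, hS, T, hT, rfl⟩
  rw [mem_preimage, relRangeSupHom_apply, hG.relRange_sdiff]
  exact subset_supClosure ⟨_, hα₀ S hS, _, hα₀ T hT, rfl⟩

end LabelledGraph

theorem stmt5 {V E A : Type*} (G : LabelledGraph V E A) (hG : G.LeftResolving)
    (𝓑 : Set (Set V)) (hacc : G.Accommodating 𝓑) :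
    G.Accommodating (tildeSet 𝓑) := by
  obtain ⟨hrelRange, hrange, hinter, hunion⟩ := hacc
  have h𝓑 : IsSublattice 𝓑 :=
    ⟨fun S hS T hT => hunion S hS T hT, fun S hS T hT => hinter S hS T hT⟩
  have hring := isSetRing_tildeSet h𝓑
  exact ⟨fun X hX α hα => hG.relRange_mem_tildeSet h𝓑 (fun S hS => hrelRange S hS α hα) hX,
    fun α hα => subset_tildeSet (hrange α hα),
    fun _ hX _ hY => hring.inter_mem hX hY,
    fun _ hX _ hY => hring.union_mem hX hY⟩
end

section
/- Let (E, L) be a labelled graph, ℓ ≥ 1, v ∈ E^0, and a a letter. If w₁ ∈ r([v]_ℓ, a), then the entire equivalence class [w₁]_{ℓ+1} is contained in r([v]_ℓ, a). Consequently r([v]_ℓ, a) is a union of ∼_{ℓ+1}-equivalence classes. -/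
/-- `Λ_ℓ(v)`: the labelled paths of length at most `ℓ` received by `v`. -/
def lambdaSet {V E A : Type*} (G : LabelledGraph V E A) (ℓ : ℕ) (v : V) : Set (List A) :=
  { α | α.length ≤ ℓ ∧ v ∈ G.relRange Set.univ α }

namespace LabelledGraph

variable {V E A : Type*} (G : LabelledGraph V E A)

lemma mem_relRange_singleton {S : Set V} {a : A} {w : V} :
    w ∈ G.relRange S [a] ↔ ∃ e, G.lab e = a ∧ G.src e ∈ S ∧ G.rng e = w := by
  constructor
  · rintro ⟨es, -, hmap, hhead, g, hg, rfl⟩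
    obtain ⟨e, rfl, rfl⟩ := List.map_eq_singleton_iff.mp hmap
    obtain rfl : g = e := by simpa using hg.symm
    exact ⟨g, rfl, hhead g rfl, rfl⟩
  · rintro ⟨e, rfl, hs, rfl⟩
    exact ⟨[e], ⟨by simp, List.isChain_singleton _⟩, rfl, by simpa using hs, e, by simp, rfl⟩

lemma mem_relRange_append_singleton {S : Set V} {β : List A} (hβ : β ≠ []) {b : A} {w : V} :
    w ∈ G.relRange S (β ++ [b]) ↔
      ∃ e, G.lab e = b ∧ G.rng e = w ∧ G.src e ∈ G.relRange S β := by
  constructor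
  · rintro ⟨es, ⟨-, hchain⟩, hmap, hhead, g, hg, rfl⟩
    obtain ⟨es, l, rfl, rfl, hl⟩ := List.map_eq_append_iff.mp hmap
    obtain ⟨e, rfl, rfl⟩ := List.map_eq_singleton_iff.mp hl
    obtain rfl : g = e := by simpa using hg.symm
    have hes : es ≠ [] := by rintro rfl; exact hβ rfl
    obtain ⟨hchain, -, hjoin⟩ := List.isChain_append.mp hchain
    have hlast := List.getLast?_eq_some_getLast hes
    refine ⟨g, rfl, rfl, es, ⟨hes, hchain⟩, rfl, ?_, es.getLast hes, hlast, hjoin _ hlast g rfl⟩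
    rwa [List.head?_append_of_ne_nil _ hes] at hhead
  · rintro ⟨e, rfl, rfl, es, ⟨hes, hchain⟩, rfl, hhead, g, hg, hjoin⟩
    refine ⟨es ++ [e], ⟨by simp, ?_⟩, by simp, ?_, e, by simp, rfl⟩
    · refine List.isChain_append.mpr ⟨hchain, List.isChain_singleton _, ?_⟩
      rintro x hx y ⟨⟩
      rwa [Option.mem_unique hx hg]
    · rwa [List.head?_append_of_ne_nil _ hes]

variable {G}

lemma nil_notMem_lambdaSet (ℓ : ℕ) (v : V) : ([] : List A) ∉ lambdaSet G ℓ v := by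
  rintro ⟨-, es, ⟨hes, -⟩, hmap, -⟩
  exact hes (List.map_eq_nil_iff.mp hmap)

lemma append_lab_mem_lambdaSet_succ_rng_iff (hG : G.LeftResolving) (ℓ : ℕ) (e : E)
    {β : List A} (hβ : β ≠ []) :
    β ++ [G.lab e] ∈ lambdaSet G (ℓ + 1) (G.rng e) ↔ β ∈ lambdaSet G ℓ (G.src e) := by
  simp only [lambdaSet, Set.mem_ofPred_eq, G.mem_relRange_append_singleton hβ, List.length_append,
    List.length_singleton, Nat.add_le_add_iff_right]
  refine and_congr_right fun _ => ⟨?_, fun h => ⟨e, rfl, rfl, h⟩⟩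
  rintro ⟨f, hlab, hrng, hf⟩
  rwa [← hG f e hrng hlab]

lemma lambdaSet_src_eq_of_lambdaSet_succ_rng_eq (hG : G.LeftResolving) {ℓ : ℕ} {e f : E}
    (hlab : G.lab e = G.lab f)
    (hrng : lambdaSet G (ℓ + 1) (G.rng e) = lambdaSet G (ℓ + 1) (G.rng f)) :
    lambdaSet G ℓ (G.src e) = lambdaSet G ℓ (G.src f) := by
  ext β
  rcases eq_or_ne β [] with rfl | hβ
  · simp only [nil_notMem_lambdaSet]
  · rw [← append_lab_mem_lambdaSet_succ_rng_iff hG ℓ e hβ,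
      ← append_lab_mem_lambdaSet_succ_rng_iff hG ℓ f hβ, hlab, hrng]

lemma mem_relRange_singleton_of_lambdaSet_succ_eq (hG : G.LeftResolving) {ℓ : ℕ} {S : Set V}
    (hS : ∀ x y, lambdaSet G ℓ x = lambdaSet G ℓ y → x ∈ S → y ∈ S) {a : A} {w u : V}
    (hw : w ∈ G.relRange S [a]) (hwu : lambdaSet G (ℓ + 1) w = lambdaSet G (ℓ + 1) u) :
    u ∈ G.relRange S [a] := by
  obtain ⟨e, rfl, he, rfl⟩ := G.mem_relRange_singleton.mp hw
  have hlab : [G.lab e] ∈ lambdaSet G (ℓ + 1) (G.rng e) :=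
    ⟨by simp, G.mem_relRange_singleton.mpr ⟨e, rfl, trivial, rfl⟩⟩
  rw [hwu] at hlab
  obtain ⟨f, hf, -, rfl⟩ := G.mem_relRange_singleton.mp hlab.2
  exact G.mem_relRange_singleton.mpr
    ⟨f, hf, hS _ _ (lambdaSet_src_eq_of_lambdaSet_succ_rng_eq hG hf.symm hwu) he, rfl⟩

end LabelledGraph

theorem stmt8_general {V E A : Type*} (G : LabelledGraph V E A) (hG : G.LeftResolving)
    (ℓ : ℕ) (v : V) (a : A) :
    (∀ w₁ ∈ G.relRange {w | lambdaSet G ℓ v = lambdaSet G ℓ w} [a],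
      {u | lambdaSet G (ℓ + 1) w₁ = lambdaSet G (ℓ + 1) u} ⊆
        G.relRange {w | lambdaSet G ℓ v = lambdaSet G ℓ w} [a]) ∧
    G.relRange {w | lambdaSet G ℓ v = lambdaSet G ℓ w} [a] =
      ⋃ w₁ ∈ G.relRange {w | lambdaSet G ℓ v = lambdaSet G ℓ w} [a],
        {u | lambdaSet G (ℓ + 1) w₁ = lambdaSet G (ℓ + 1) u} := by
  have hclass : ∀ w₁ ∈ G.relRange {w | lambdaSet G ℓ v = lambdaSet G ℓ w} [a],
      {u | lambdaSet G (ℓ + 1) w₁ = lambdaSet G (ℓ + 1) u} ⊆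
        G.relRange {w | lambdaSet G ℓ v = lambdaSet G ℓ w} [a] :=
    fun _ hw₁ _ hu => LabelledGraph.mem_relRange_singleton_of_lambdaSet_succ_eq hG
      (fun _ _ hxy hx => hx.trans hxy) hw₁ hu
  refine ⟨hclass, Set.Subset.antisymm ?_ ?_⟩
  · exact fun u hu => Set.mem_biUnion hu rfl
  · exact Set.iUnion₂_subset hclass

theorem stmt8 {V E A : Type*} (G : LabelledGraph V E A) (hG : G.LeftResolving)
    (ℓ : ℕ) (hℓ : 1 ≤ ℓ) (v : V) (a : A) :
    (∀ w₁ ∈ G.relRange {w | lambdaSet G ℓ v = lambdaSet G ℓ w} [a],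
      {u | lambdaSet G (ℓ + 1) w₁ = lambdaSet G (ℓ + 1) u} ⊆
        G.relRange {w | lambdaSet G ℓ v = lambdaSet G ℓ w} [a]) ∧
    G.relRange {w | lambdaSet G ℓ v = lambdaSet G ℓ w} [a] =
      ⋃ w₁ ∈ G.relRange {w | lambdaSet G ℓ v = lambdaSet G ℓ w} [a],
        {u | lambdaSet G (ℓ + 1) w₁ = lambdaSet G (ℓ + 1) u} :=
  stmt8_general G hG ℓ v a
end

section
/- Let G = ⊕_{n ∈ ℤ} ℤ with standard basis (χ_n)_{n∈ℤ}, and define the group homomorphism T : G → G by T(χ_0) = −χ_1 − χ_{−1} and T(χ_n) = χ_n − χ_{n−1} − χ_{n+1} for n ≠ 0. Then T is injective, and the cokernel G/im(T) is free abelian of rank 2, generated by the images of χ_0 and χ_1. -/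
/-!
Pointwise, `(T f) m = [m ≠ 0] f m - f (m - 1) - f (m + 1)`; one step above the top of the support
of `f ≠ 0` this is minus the leading coefficient, so `T` is injective.

A linear map `ψ` kills the image of `T` exactly when `x n = ψ χ_n` satisfies
`x 1 + x (-1) = 0` and `x n = x (n - 1) + x (n + 1)` for `n ≠ 0`, and such a sequence is
determined by `x 0` and `x 1`. The two period-six solutions `a`, `b` in `ℤ` with initial values
`(1, 0)` and `(0, 1)` give a map `φ χ_n = (a n, b n)` to `ℤ²` killing `im T`. The classes
`[χ_n]` satisfy the same relations, hence `[χ_n] = a n [χ_0] + b n [χ_1]`, and `φ` descends to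
an isomorphism whose inverse is `(s, t) ↦ s [χ_0] + t [χ_1]`.
-/

open Finsupp (single)

/-- `T` is the map `(1 - Φ)_ℓ` of the labelled graph over `ℤ`, written on the basis
`χ n = single n 1`. -/
def IsOneSubPhi (T : (ℤ →₀ ℤ) →ₗ[ℤ] (ℤ →₀ ℤ)) : Prop :=
  T (single 0 1) = -single 1 1 - single (-1) 1 ∧
    ∀ n : ℤ, n ≠ 0 → T (single n 1) = single n 1 - single (n - 1) 1 - single (n + 1) 1

def RespectsRelations {M : Type*} [AddCommGroup M] (x : ℤ → M) : Prop :=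
  x 1 + x (-1) = 0 ∧ ∀ n : ℤ, n ≠ 0 → x n = x (n - 1) + x (n + 1)

namespace IsOneSubPhi

variable {T : (ℤ →₀ ℤ) →ₗ[ℤ] (ℤ →₀ ℤ)}

theorem apply_apply (hT : IsOneSubPhi T) (f : ℤ →₀ ℤ) (m : ℤ) :
    T f m = (if m = 0 then 0 else f m) - f (m - 1) - f (m + 1) := by
  induction f using Finsupp.induction_linear with
  | zero => simp
  | add f g hf hg =>
    rw [map_add, Finsupp.add_apply, hf, hg]
    split_ifs <;> simp only [Finsupp.add_apply] <;> ring
  | single n c =>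
    rw [← Finsupp.smul_single_one, map_smul]
    rcases eq_or_ne n 0 with rfl | hn
    · simp only [hT.1, Finsupp.smul_apply, Finsupp.sub_apply, Finsupp.neg_apply,
        Finsupp.single_apply, smul_eq_mul]
      split_ifs <;> omega
    · simp only [hT.2 n hn, Finsupp.smul_apply, Finsupp.sub_apply, Finsupp.single_apply,
        smul_eq_mul]
      split_ifs <;> omega

theorem injective (hT : IsOneSubPhi T) : Function.Injective T := by
  rw [← LinearMap.ker_eq_bot, LinearMap.ker_eq_bot']
  intro f hf
  by_contra hne
  have hsupp := Finsupp.support_nonempty_iff.mpr hne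
  set N := f.support.max' hsupp
  have hN : f N ≠ 0 := Finsupp.mem_support_iff.mp (f.support.max'_mem hsupp)
  have hgt : ∀ m, N < m → f m = 0 := fun m hm =>
    Finsupp.notMem_support_iff.mp fun h => (f.support.le_max' m h).not_gt hm
  have hTf := hT.apply_apply f (N + 1)
  rw [hf, Finsupp.zero_apply, add_sub_cancel_right, hgt (N + 1) (by omega),
    hgt (N + 1 + 1) (by omega)] at hTf
  split_ifs at hTf <;> omega

theorem comp_eq_zero_iff (hT : IsOneSubPhi T) {M : Type*} [AddCommGroup M] [Module ℤ M]
    (ψ : (ℤ →₀ ℤ) →ₗ[ℤ] M) :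
    ψ ∘ₗ T = 0 ↔ RespectsRelations fun n => ψ (single n 1) := by
  have h0 : ψ (T (single 0 1)) = -(ψ (single 1 1) + ψ (single (-1) 1)) := by
    rw [hT.1, map_sub, map_neg, neg_add']
  have hn (n : ℤ) (hn : n ≠ 0) : ψ (T (single n 1)) =
      ψ (single n 1) - (ψ (single (n - 1) 1) + ψ (single (n + 1) 1)) := by
    rw [hT.2 n hn, map_sub, map_sub, sub_sub]
  constructor
  · intro h
    have hzero (n : ℤ) : ψ (T (single n 1)) = 0 := LinearMap.congr_fun h (single n 1)
    refine ⟨?_, fun n hn' => ?_⟩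
    · simpa only [h0, neg_eq_zero] using hzero 0
    · simpa only [hn n hn', sub_eq_zero] using hzero n
  · rintro ⟨hx0, hx⟩
    refine Finsupp.lhom_ext' fun n => LinearMap.ext_ring ?_
    rcases eq_or_ne n 0 with rfl | hn'
    · simp [h0, hx0]
    · simp [hn n hn', ← hx n hn']

end IsOneSubPhi

namespace RespectsRelations

variable {M : Type*} [AddCommGroup M] {x y : ℤ → M}

theorem map {N F : Type*} [AddCommGroup N] [FunLike F M N] [AddMonoidHomClass F M N]
    (hx : RespectsRelations x) (g : F) : RespectsRelations (g ∘ x) :=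
  ⟨by simp only [Function.comp_apply, ← map_add, hx.1, map_zero],
    fun n hn => by simp only [Function.comp_apply, hx.2 n hn, map_add]⟩

theorem pi {ι : Type*} {x : ℤ → ι → M} (hx : ∀ i, RespectsRelations fun n => x n i) :
    RespectsRelations x :=
  ⟨funext fun i => (hx i).1, fun n hn => funext fun i => (hx i).2 n hn⟩

theorem add_one_eq (hx : RespectsRelations x) {n : ℤ} (hn : n ≠ 0) :
    x (n + 1) = x n - x (n - 1) := by
  rw [hx.2 n hn, add_sub_cancel_left]

theorem sub_one_eq (hx : RespectsRelations x) {n : ℤ} (hn : n ≠ 0) :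
    x (n - 1) = x n - x (n + 1) := by
  rw [hx.2 n hn, add_sub_cancel_right]

theorem eq_of_apply_zero_one (hx : RespectsRelations x) (hy : RespectsRelations y)
    (h0 : x 0 = y 0) (h1 : x 1 = y 1) : x = y := by
  suffices h : ∀ n, x n = y n ∧ x (n + 1) = y (n + 1) from funext fun n => (h n).1
  intro n
  induction n using Int.inductionOn' (b := 0) with
  | zero => exact ⟨h0, h1⟩
  | succ k hk ih =>
    refine ⟨ih.2, ?_⟩
    rw [hx.add_one_eq (by omega), hy.add_one_eq (by omega), add_sub_cancel_right, ih.1, ih.2]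
  | pred k hk ih =>
    refine ⟨?_, by rw [sub_add_cancel]; exact ih.1⟩
    rcases eq_or_ne k 0 with rfl | hk0
    · rw [zero_sub, eq_neg_of_add_eq_zero_right hx.1, eq_neg_of_add_eq_zero_right hy.1, h1]
    · rw [hx.sub_one_eq hk0, hy.sub_one_eq hk0, ih.1, ih.2]

end RespectsRelations

def sixPeriodic (n : ℤ) : ℤ := ![1, 1, 0, -1, -1, 0] (n : ZMod 6)

theorem sixPeriodic_eq_add (n : ℤ) :
    sixPeriodic n = sixPeriodic (n - 1) + sixPeriodic (n + 1) := by
  simp only [sixPeriodic, Int.cast_sub, Int.cast_add, Int.cast_one]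
  generalize (n : ZMod 6) = i
  fin_cases i <;> rfl

theorem respectsRelations_sixPeriodic_abs_add_one :
    RespectsRelations fun n => sixPeriodic (|n| + 1) := by
  refine ⟨by decide, fun n hn => ?_⟩
  dsimp only
  rcases hn.lt_or_gt with hn | hn
  · rw [abs_of_neg hn, abs_of_neg (by omega : n - 1 < 0), abs_of_nonpos (by omega : n + 1 ≤ 0),
      add_comm (sixPeriodic _)]
    convert sixPeriodic_eq_add (-n + 1) using 2 <;> ring_nf
  · rw [abs_of_pos hn, abs_of_nonneg (by omega : 0 ≤ n - 1), abs_of_pos (by omega : 0 < n + 1)]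
    convert sixPeriodic_eq_add (n + 1) using 2; ring_nf

theorem respectsRelations_sixPeriodic_sub_one : RespectsRelations fun n => sixPeriodic (n - 1) :=
  ⟨by decide, fun n _ => by convert sixPeriodic_eq_add (n - 1) using 2; ring_nf⟩

def cokernelCoords (n : ℤ) : Fin 2 → ℤ := ![sixPeriodic (|n| + 1), sixPeriodic (n - 1)]

theorem cokernelCoords_zero : cokernelCoords 0 = ![1, 0] := by decide

theorem cokernelCoords_one : cokernelCoords 1 = ![0, 1] := by decide

theorem respectsRelations_cokernelCoords : RespectsRelations cokernelCoords := by
  refine RespectsRelations.pi fun i => ?_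
  fin_cases i
  · exact respectsRelations_sixPeriodic_abs_add_one
  · exact respectsRelations_sixPeriodic_sub_one

theorem stmt11 (T : (ℤ →₀ ℤ) →ₗ[ℤ] (ℤ →₀ ℤ))
    (hT0 : T (Finsupp.single 0 1) = -Finsupp.single 1 1 - Finsupp.single (-1) 1)
    (hTn : ∀ n : ℤ, n ≠ 0 → T (Finsupp.single n 1) =
      Finsupp.single n 1 - Finsupp.single (n - 1) 1 - Finsupp.single (n + 1) 1) :
    Function.Injective T ∧
    ∃ e : ((ℤ →₀ ℤ) ⧸ LinearMap.range T) ≃ₗ[ℤ] (Fin 2 → ℤ),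
      e (Submodule.Quotient.mk (Finsupp.single 0 1)) = ![1, 0] ∧
      e (Submodule.Quotient.mk (Finsupp.single 1 1)) = ![0, 1] := by
  have hT : IsOneSubPhi T := ⟨hT0, hTn⟩
  let φ := Finsupp.linearCombination ℤ cokernelCoords
  have hφ (n : ℤ) : φ (single n 1) = cokernelCoords n := by simp [φ]
  have hφT : φ ∘ₗ T = 0 :=
    (hT.comp_eq_zero_iff φ).2 (by simpa only [hφ] using respectsRelations_cokernelCoords)
  let π := (LinearMap.range T).mkQ
  let L := Fintype.linearCombination ℤ ![π (single 0 1), π (single 1 1)]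
  have hπ : π = L ∘ₗ φ := by
    have hrel := (hT.comp_eq_zero_iff π).1 (LinearMap.range_mkQ_comp T)
    have := hrel.eq_of_apply_zero_one (respectsRelations_cokernelCoords.map L)
      (by simp [cokernelCoords_zero, L, Fintype.linearCombination_apply])
      (by simp [cokernelCoords_one, L, Fintype.linearCombination_apply])
    exact Finsupp.lhom_ext' fun n => LinearMap.ext_ring <| by simpa [hφ] using congr_fun this n
  refine ⟨hT.injective, LinearEquiv.ofLinearMap
    ((LinearMap.range T).liftQ φ (LinearMap.range_le_ker_iff.2 hφT)) L ?_ ?_, ?_, ?_⟩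
  · ext i j
    fin_cases i <;> fin_cases j <;> simp [L, π, hφ, cokernelCoords_zero, cokernelCoords_one]
  · refine Submodule.linearMap_qext _ ?_
    rw [LinearMap.comp_assoc, Submodule.liftQ_mkQ, ← hπ]
    rfl
  · simp [hφ, cokernelCoords_zero]
  · simp [hφ, cokernelCoords_one]
end

section
/- Define T : ℤ² → ℤ⁴ by T(e₁) = (−1, −2, 0, −1) and T(e₂) = (−1, 0, −2, −1) (coordinates indexed by (α₁α₁, α₁α₂, α₂α₁, α₂α₂)). Then T is injective and ℤ⁴/im(T) ≅ ℤ² × (ℤ/2ℤ), where the torsion generator is the image of (1,1,1,1). -/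
noncomputable section

abbrev M4 : Matrix (Fin 4) (Fin 2) ℤ := !![(-1 : ℤ), -1; -2, 0; 0, -2; -1, -1]

def f : (Fin 4 → ℤ) →ₗ[ℤ] (Fin 2 → ℤ) × ZMod 2 where
  toFun x := (![x 1 + x 2 - 2 * x 0, x 3 - x 0], (x 1 : ZMod 2))
  map_add' x y := by
    refine Prod.ext ?_ ?_
    · funext i; fin_cases i <;> simp <;> try ring
    · simp
  map_smul' c x := by
    refine Prod.ext ?_ ?_
    · funext i; fin_cases i <;> simp [Pi.smul_apply, smul_eq_mul] <;> try ring
    · simp [Pi.smul_apply, smul_eq_mul]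

lemma hsurj : Function.Surjective f := by
  rintro ⟨a, c⟩
  refine ⟨![0, c.val, a 0 - c.val, a 1], ?_⟩
  refine Prod.ext ?_ ?_
  · funext i; fin_cases i <;> simp [f] <;> ring
  · simp [f]

lemma hker : LinearMap.range (Matrix.toLin' M4) = LinearMap.ker f := by
  ext x
  constructor
  · rintro ⟨y, rfl⟩
    have h : ∀ i, Matrix.toLin' M4 y i = Matrix.mulVec M4 y i := fun i => rfl
    simp only [LinearMap.mem_ker]
    refine Prod.ext ?_ ?_
    · funext i
      fin_cases i <;>
        simp [f, Matrix.toLin'_apply, Matrix.mulVec, dotProduct,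
          Fin.sum_univ_succ] <;> ring
    · simp [f, Matrix.toLin'_apply, Matrix.mulVec, dotProduct, Fin.sum_univ_succ]
      exact Or.inl (by decide)
  · intro hx
    simp only [LinearMap.mem_ker, f, LinearMap.coe_mk, AddHom.coe_mk, Prod.mk_eq_zero] at hx
    obtain ⟨h1, h2⟩ := hx
    have e1 : x 1 + x 2 - 2 * x 0 = 0 := by
      have := congrFun h1 0; simpa using this
    have e2 : x 3 - x 0 = 0 := by
      have := congrFun h1 1; simpa using this
    have e3 : (2 : ℤ) ∣ x 1 := by
      have := (ZMod.intCast_zmod_eq_zero_iff_dvd (x 1) 2).mp h2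
      exact_mod_cast this
    obtain ⟨k, hk⟩ := e3
    refine ⟨![-k, k - x 0], ?_⟩
    funext i
    fin_cases i <;>
      simp [Matrix.toLin'_apply, Matrix.mulVec, dotProduct, Fin.sum_univ_succ] <;>
      omega

theorem stmt12 :
    Function.Injective (Matrix.toLin' !![(-1 : ℤ), -1; -2, 0; 0, -2; -1, -1]) ∧
    ∃ e : ((Fin 4 → ℤ) ⧸
        LinearMap.range (Matrix.toLin' !![(-1 : ℤ), -1; -2, 0; 0, -2; -1, -1])) ≃+
        ((Fin 2 → ℤ) × ZMod 2),
      e (Submodule.Quotient.mk ![1, 1, 1, 1]) = (0, 1) := by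
  constructor
  · intro x y h
    have h1 := congrFun h 1
    have h2 := congrFun h 2
    simp [Matrix.toLin'_apply, Matrix.mulVec, dotProduct, Fin.sum_univ_succ] at h1 h2
    funext i
    fin_cases i <;> simp <;> omega
  · refine ⟨((Submodule.quotEquivOfEq (LinearMap.range (Matrix.toLin' M4)) (LinearMap.ker f) hker).toAddEquiv).trans
      (f.quotKerEquivOfSurjective hsurj).toAddEquiv, ?_⟩
    have : (f.quotKerEquivOfSurjective hsurj) (Submodule.Quotient.mk ![1, 1, 1, 1])
        = f ![1, 1, 1, 1] := by
      simp [LinearMap.quotKerEquivOfSurjective, LinearMap.quotKerEquivRange_apply_mk]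
    rw [AddEquiv.trans_apply]
    simp only [LinearEquiv.coe_toAddEquiv]
    erw [Submodule.quotEquivOfEq_mk (LinearMap.range (Matrix.toLin' M4)) (LinearMap.ker f) hker]
    erw [this]
    refine Prod.ext ?_ ?_
    · funext i; fin_cases i <;> simp [f]
    · simp [f]
end
end

section
/- Let G = ⊕_{i∈ℤ} (ℤ ⊕ ℤ), with basis vectors χ_{(v,i)} and χ_{(w,i)} for i ∈ ℤ. Define T : G → G by T(χ_{(v,i)}) = χ_{(v,i)} − χ_{(v,i+1)} − χ_{(w,i+1)} and T(χ_{(w,i)}) = χ_{(w,i)} − χ_{(v,i+1)}. Then T is injective and G/im(T) is free abelian of rank 2, generated by the images of χ_{(w,0)} and χ_{(w,1)}. -/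
/-!
Write `v_i = single (inl i) 1` and `w_i = single (inr i) 1`. Then `T = 1 - N` where `N` raises
the index by one, so a nonzero fixed point of `N` would have a minimal index exceeding itself:
`T` is injective. Modulo the image of `T`, `w_i ≡ v_{i+1}` and `v_i ≡ v_{i+1} + w_{i+1}`, so
the classes `c_i = [w_i]` satisfy `c_i = c_{i+1} + c_{i+2}` and are determined by `c_0, c_1`.
The orbit `seq` of `e₀` under the companion map of this recurrence on `ℤ²` defines
`w_i ↦ seq i, v_i ↦ seq (i - 1)`, which is exact after `T` and split by `e_k ↦ w_k`.
-/

open Finsupp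

theorem Finsupp.map_mem_supported_lt_of_le {α ι R : Type*} [Preorder ι] [Semiring R]
    {d : α → ι} {N : (α →₀ R) →ₗ[R] (α →₀ R)}
    (hN : ∀ a, N (single a 1) ∈ supported R R {b | d a < d b}) (k : ι) {x : α →₀ R}
    (hx : x ∈ supported R R {a | k ≤ d a}) : N x ∈ supported R R {b | k < d b} := by
  rw [supported_eq_span_single] at hx
  refine Submodule.span_le (p := (supported R R {b | k < d b}).comap N).mpr ?_ hx
  rintro _ ⟨a, ha, rfl⟩
  exact supported_mono (fun b hb => lt_of_le_of_lt ha hb) (hN a)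

theorem Finsupp.injective_id_sub_of_degree_lt {α ι R : Type*} [LinearOrder ι] [Ring R]
    (d : α → ι) {N : (α →₀ R) →ₗ[R] (α →₀ R)}
    (hN : ∀ a, N (single a 1) ∈ supported R R {b | d a < d b}) :
    Function.Injective (LinearMap.id - N : (α →₀ R) →ₗ[R] (α →₀ R)) := by
  refine (injective_iff_map_eq_zero _).mpr fun x hx => ?_
  have hfix : N x = x := (sub_eq_zero.mp hx).symm
  by_contra hne
  obtain ⟨a, ha, hmin⟩ := x.support.exists_min_image d (support_nonempty_iff.mpr hne)
  have hsupp := map_mem_supported_lt_of_le hN (d a) ((mem_supported R _).mpr fun b hb => hmin b hb)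
  rw [hfix, mem_supported] at hsupp
  exact lt_irrefl _ (hsupp ha)

theorem Int.eq_of_eq_add_of_eq_add {M : Type*} [AddCommGroup M] {f g : ℤ → M}
    (hf : ∀ i, f i = f (i + 1) + f (i + 2)) (hg : ∀ i, g i = g (i + 1) + g (i + 2))
    (h₀ : f 0 = g 0) (h₁ : f 1 = g 1) : f = g := by
  suffices h : ∀ i, f i = g i ∧ f (i + 1) = g (i + 1) from funext fun i => (h i).1
  intro i
  induction i using Int.induction_on with
  | zero => exact ⟨h₀, by simpa using h₁⟩
  | succ n ih =>
    refine ⟨ih.2, ?_⟩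
    rw [add_assoc, one_add_one_eq_two,
      eq_sub_of_add_eq' (hf n).symm, eq_sub_of_add_eq' (hg n).symm, ih.1, ih.2]
  | pred n ih =>
    have hn : -(n : ℤ) - 1 + 1 = -n := by ring
    have hn' : -(n : ℤ) - 1 + 2 = -n + 1 := by ring
    refine ⟨?_, by rw [hn]; exact ih.1⟩
    rw [hf, hg, hn, hn', ih.1, ih.2]

namespace FibonacciCokernel

def shift : (Fin 2 → ℤ) ≃ₗ[ℤ] (Fin 2 → ℤ) where
  toFun x := ![x 1, x 0 - x 1]
  invFun x := ![x 0 + x 1, x 0]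
  map_add' x y := by ext j; fin_cases j <;> simp; abel
  map_smul' c x := by ext j; fin_cases j <;> simp [mul_sub]
  left_inv x := by ext j; fin_cases j <;> simp
  right_inv x := by ext j; fin_cases j <;> simp

theorem shift_add_shift_shift (x : Fin 2 → ℤ) : shift x + shift (shift x) = x := by
  ext j; fin_cases j <;> simp [shift]

def seq (i : ℤ) : Fin 2 → ℤ := (shift ^ i) ![1, 0]

theorem seq_zero : seq 0 = ![1, 0] := rfl

theorem seq_one : seq 1 = ![0, 1] := by
  ext j; fin_cases j <;> simp [seq, shift]

theorem seq_eq_add (i : ℤ) : seq i = seq (i + 1) + seq (i + 2) := by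
  rw [show i + 2 = i + 1 + 1 by ring, seq, seq, seq, zpow_add_one, zpow_add_one, zpow_add_one,
    LinearEquiv.mul_apply, LinearEquiv.mul_apply, LinearEquiv.mul_apply, ← map_add,
    shift_add_shift_shift]

abbrev G := (ℤ ⊕ ℤ) →₀ ℤ

noncomputable def proj : G →ₗ[ℤ] (Fin 2 → ℤ) :=
  linearCombination ℤ (Sum.elim (fun i => seq (i - 1)) seq)

noncomputable def splitting : (Fin 2 → ℤ) →ₗ[ℤ] G :=
  Fintype.linearCombination ℤ ![single (Sum.inr 0) 1, single (Sum.inr 1) 1]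

theorem proj_comp_splitting : proj ∘ₗ splitting = LinearMap.id := by
  ext i j
  fin_cases i <;> fin_cases j <;> simp [proj, splitting, seq_zero, seq_one]

def MapsInl (T : G →ₗ[ℤ] G) : Prop :=
  ∀ i : ℤ, T (single (Sum.inl i) 1) =
    single (Sum.inl i) 1 - single (Sum.inl (i + 1)) 1 - single (Sum.inr (i + 1)) 1

def MapsInr (T : G →ₗ[ℤ] G) : Prop :=
  ∀ i : ℤ, T (single (Sum.inr i) 1) = single (Sum.inr i) 1 - single (Sum.inl (i + 1)) 1

section Relations

variable {T : G →ₗ[ℤ] G}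

theorem single_sub_map_mem_supported (hTv : MapsInl T) (hTw : MapsInr T) (a : ℤ ⊕ ℤ) :
    single a 1 - T (single a 1) ∈
      supported ℤ ℤ {b | Sum.elim id id a < Sum.elim id id b} := by
  cases a with
  | inl i =>
    rw [hTv i, sub_sub, sub_sub_cancel]
    exact add_mem (single_mem_supported ℤ _ (by simp)) (single_mem_supported ℤ _ (by simp))
  | inr i =>
    rw [hTw i, sub_sub_cancel]
    exact single_mem_supported ℤ _ (by simp)

theorem proj_comp (hTv : MapsInl T) (hTw : MapsInr T) : proj ∘ₗ T = 0 := by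
  ext (i | i)
  · simp [hTv i, proj, seq_eq_add (i - 1), show i - 1 + 2 = i + 1 by ring]
  · simp [hTw i, proj]

theorem mkQ_single_inr (hTw : MapsInr T) (i : ℤ) :
    (LinearMap.range T).mkQ (single (Sum.inr i) 1) =
      (LinearMap.range T).mkQ (single (Sum.inl (i + 1)) 1) := by
  have h := LinearMap.congr_fun (LinearMap.range_mkQ_comp T) (single (Sum.inr i) 1)
  rwa [LinearMap.comp_apply, hTw i, map_sub, LinearMap.zero_apply, sub_eq_zero] at h

theorem mkQ_single_inl (hTv : MapsInl T) (i : ℤ) :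
    (LinearMap.range T).mkQ (single (Sum.inl i) 1) =
      (LinearMap.range T).mkQ (single (Sum.inl (i + 1)) 1) +
        (LinearMap.range T).mkQ (single (Sum.inr (i + 1)) 1) := by
  have h := LinearMap.congr_fun (LinearMap.range_mkQ_comp T) (single (Sum.inl i) 1)
  rwa [LinearMap.comp_apply, hTv i, sub_sub, map_sub, map_add, LinearMap.zero_apply,
    sub_eq_zero] at h

theorem mkQ_single_inr_eq_splitting (hTv : MapsInl T) (hTw : MapsInr T) (i : ℤ) :
    (LinearMap.range T).mkQ (single (Sum.inr i) 1) =
      (LinearMap.range T).mkQ (splitting (seq i)) := by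
  set q := (LinearMap.range T).mkQ
  refine congrFun (Int.eq_of_eq_add_of_eq_add (f := fun i => q (single (Sum.inr i) 1))
    (g := fun i => q (splitting (seq i))) (fun i => ?_) (fun i => ?_) ?_ ?_) i
  · rw [mkQ_single_inr hTw i, mkQ_single_inl hTv (i + 1), mkQ_single_inr hTw (i + 1),
      show i + 1 + 1 = i + 2 by ring]
  · rw [seq_eq_add i, map_add, map_add]
  · simp [splitting, Fintype.linearCombination_apply, seq_zero]
  · simp [splitting, Fintype.linearCombination_apply, seq_one]

theorem mkQ_comp_splitting_comp_proj (hTv : MapsInl T) (hTw : MapsInr T) :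
    (LinearMap.range T).mkQ ∘ₗ splitting ∘ₗ proj = (LinearMap.range T).mkQ := by
  ext (i | i)
  · have h := mkQ_single_inr_eq_splitting hTv hTw (i - 1)
    rw [mkQ_single_inr hTw, sub_add_cancel] at h
    simpa [proj] using h.symm
  · simpa [proj] using (mkQ_single_inr_eq_splitting hTv hTw i).symm

theorem exact_proj (hTv : MapsInl T) (hTw : MapsInr T) : Function.Exact T proj := by
  refine LinearMap.exact_of_comp_of_mem_range (proj_comp hTv hTw) fun x hx => ?_
  rw [← Submodule.Quotient.mk_eq_zero, ← Submodule.mkQ_apply,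
    ← mkQ_comp_splitting_comp_proj hTv hTw]
  simp [hx]

end Relations

end FibonacciCokernel

open FibonacciCokernel

/-- `Sum.inl i` plays the role of the basis vector `χ_{(v,i)}` and `Sum.inr i` that of
`χ_{(w,i)}`. -/
theorem stmt13 (T : ((ℤ ⊕ ℤ) →₀ ℤ) →ₗ[ℤ] ((ℤ ⊕ ℤ) →₀ ℤ))
    (hTv : ∀ i : ℤ, T (Finsupp.single (Sum.inl i) 1) =
      Finsupp.single (Sum.inl i) 1 - Finsupp.single (Sum.inl (i + 1)) 1 -
        Finsupp.single (Sum.inr (i + 1)) 1)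
    (hTw : ∀ i : ℤ, T (Finsupp.single (Sum.inr i) 1) =
      Finsupp.single (Sum.inr i) 1 - Finsupp.single (Sum.inl (i + 1)) 1) :
    Function.Injective T ∧
    ∃ e : (((ℤ ⊕ ℤ) →₀ ℤ) ⧸ LinearMap.range T) ≃ₗ[ℤ] (Fin 2 → ℤ),
      e (Submodule.Quotient.mk (Finsupp.single (Sum.inr 0) 1)) = ![1, 0] ∧
      e (Submodule.Quotient.mk (Finsupp.single (Sum.inr 1) 1)) = ![0, 1] := by
  have hinj := injective_id_sub_of_degree_lt (Sum.elim id id) (N := LinearMap.id - T)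
    (single_sub_map_mem_supported hTv hTw)
  rw [sub_sub_cancel] at hinj
  have hsurj : Function.Surjective proj :=
    fun y => ⟨splitting y, LinearMap.congr_fun proj_comp_splitting y⟩
  set e := (exact_proj hTv hTw).linearEquivOfSurjective hsurj
  have he (x : G) : e (Submodule.Quotient.mk x) = proj x := by
    rw [← (exact_proj hTv hTw).linearEquivOfSurjective_symm_apply hsurj,
      LinearEquiv.apply_symm_apply]
  refine ⟨hinj, e, ?_, ?_⟩
  · simp [he, proj, seq_zero]
  · simp [he, proj, seq_one]
end

section
/- Let X be a one-sided shift space over a finite alphabet and let B_X be the smallest collection of subsets of X containing all sets C(u, v) (for finite words u, v, including the empty word) and closed under finite intersections, finite unions, and relative complements. Then B_X is accommodating for the labelled graph (E_X, L_X): it is closed under relative ranges r(A, α) for labelled paths α and contains r(α) for every labelled path α. -/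
/-- Prepend a letter to a one-sided sequence. -/
def scons {A : Type*} (a : A) (y : ℕ → A) : ℕ → A
  | 0 => a
  | n + 1 => y n

/-- Prepend a finite word to a one-sided sequence. -/
def wcons {A : Type*} (u : List A) (x : ℕ → A) : ℕ → A :=
  u.foldr scons x

/-- The labelled graph `(E_X, L_X)` of a one-sided shift space `X`: vertices are
sequences, and there is an edge labelled `a` from `x` to `y` exactly when
`x, y ∈ X` and `x = ay`. -/
def shiftGraph {A : Type*} (X : Set (ℕ → A)) :
    LabelledGraph (ℕ → A)
      {p : (ℕ → A) × A × (ℕ → A) // p.1 ∈ X ∧ p.2.2 ∈ X ∧ p.1 = scons p.2.1 p.2.2} A where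
  src e := e.1.1
  rng e := e.1.2.2
  lab e := e.1.2.1

/-- `C(u, v) = { vx ∈ X : ux ∈ X }`. -/
def cylSet {A : Type*} (X : Set (ℕ → A)) (u v : List A) : Set (ℕ → A) :=
  { z | ∃ x : ℕ → A, z = wcons v x ∧ z ∈ X ∧ wcons u x ∈ X }

/-- `B_X`: the smallest collection of subsets of `X` containing all the sets `C(u, v)`
and closed under finite intersections, finite unions and relative complements. -/
inductive BX {A : Type*} (X : Set (ℕ → A)) : Set (ℕ → A) → Prop
  | base (u v : List A) : BX X (cylSet X u v)
  | inter {S T : Set (ℕ → A)} : BX X S → BX X T → BX X (S ∩ T)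
  | union {S T : Set (ℕ → A)} : BX X S → BX X T → BX X (S ∪ T)
  | sdiff {S T : Set (ℕ → A)} : BX X S → BX X T → BX X (S \ T)

section Aux

variable {A : Type*}

lemma scons_inj' {a : A} {y z : ℕ → A} (h : scons a y = scons a z) : y = z := by
  funext n; exact congrFun h (n + 1)

lemma scons_zero_eq {a b : A} {y z : ℕ → A} (h : scons a y = scons b z) : a = b :=
  congrFun h 0

lemma wcons_nil' (x : ℕ → A) : wcons ([] : List A) x = x := rfl

lemma wcons_cons' (b : A) (u : List A) (x : ℕ → A) :
    wcons (b :: u) x = scons b (wcons u x) := rfl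

lemma wcons_append' (u v : List A) (x : ℕ → A) :
    wcons (u ++ v) x = wcons u (wcons v x) := by
  simp [wcons, List.foldr_append]

lemma mem_of_wcons_mem {X : Set (ℕ → A)} (hshift : ∀ x ∈ X, (fun n => x (n + 1)) ∈ X)
    {u : List A} {x : ℕ → A} (h : wcons u x ∈ X) : x ∈ X := by
  induction u with
  | nil => exact h
  | cons b u ih =>
      apply ih
      have h2 := hshift _ h
      have : (fun n => wcons (b :: u) x (n + 1)) = wcons u x := rfl
      rwa [this] at h2

/-- The single-letter relative range in the shift graph. -/
lemma relRange_singleton (X : Set (ℕ → A)) (S : Set (ℕ → A)) (a : A) :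
    (shiftGraph X).relRange S [a]
      = {y | y ∈ X ∧ scons a y ∈ X ∧ scons a y ∈ S} := by
  ext y
  constructor
  · rintro ⟨es, ⟨hne, hch⟩, hlab, hsrc, e, hlast, hrng⟩
    obtain ⟨e', rfl⟩ : ∃ e', es = [e'] := by
      cases es with
      | nil => exact absurd rfl hne
      | cons e0 es' =>
          cases es' with
          | nil => exact ⟨e0, rfl⟩
          | cons f es'' => simp [shiftGraph] at hlab
    simp only [List.getLast?_singleton, Option.mem_some_iff] at hlast
    subst hlast
    obtain ⟨⟨x, b, z⟩, hx, hz, hxz⟩ := e'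
    simp only [shiftGraph, List.map_cons, List.map_nil, List.cons.injEq] at hlab
    have hb : b = a := hlab.1
    subst hb
    have hsy : (shiftGraph X).src ⟨(x, b, z), hx, hz, hxz⟩ ∈ S := by
      apply hsrc; simp
    simp only [shiftGraph] at hrng hsy
    subst hrng
    refine ⟨hz, ?_, ?_⟩ <;> rw [← hxz] <;> assumption
  · rintro ⟨hy, hay, haS⟩
    refine ⟨[⟨(scons a y, a, y), hay, hy, rfl⟩], ⟨by simp, List.isChain_singleton _⟩,
      rfl, ?_, ⟨(scons a y, a, y), hay, hy, rfl⟩, by simp, rfl⟩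
    intro e he
    simp only [List.head?_cons, Option.mem_some_iff] at he
    subst he
    exact haS

lemma relRange_nil (X : Set (ℕ → A)) (S : Set (ℕ → A)) :
    (shiftGraph X).relRange S ([] : List A) = ∅ := by
  ext y
  simp only [Set.mem_empty_iff_false, iff_false]
  rintro ⟨es, ⟨hne, _⟩, hlab, _⟩
  exact hne (List.map_eq_nil_iff.mp hlab)

lemma empty_mem_BX (X : Set (ℕ → A)) : BX X (∅ : Set (ℕ → A)) := by
  have : (∅ : Set (ℕ → A)) = cylSet X [] [] \ cylSet X [] [] := (Set.diff_self).symm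
  rw [this]
  exact BX.sdiff (BX.base _ _) (BX.base _ _)

/-- Splitting off the first letter of a labelled path. -/
lemma relRange_cons {V E B : Type*} (G : LabelledGraph V E B) (S : Set V) (a : B)
    (α : List B) (hα : α ≠ []) :
    G.relRange S (a :: α) = G.relRange (G.relRange S [a]) α := by
  ext w
  constructor
  · rintro ⟨es, ⟨hne, hch⟩, hlab, hsrc, e, hlast, hrng⟩
    cases es with
    | nil => exact absurd rfl hne
    | cons e0 es' =>
        simp only [List.map_cons, List.cons.injEq] at hlab
        cases es' with
        | nil => exact absurd hlab.2.symm hα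
        | cons f es'' =>
            have hch' := (List.isChain_cons_cons.mp hch)
            refine ⟨f :: es'', ⟨by simp, hch'.2⟩, hlab.2, ?_, e, ?_, hrng⟩
            · intro g hg
              simp only [List.head?_cons, Option.mem_some_iff] at hg
              subst hg
              rw [← hch'.1]
              refine ⟨[e0], ⟨by simp, List.isChain_singleton _⟩, by simp [hlab.1], ?_,
                e0, by simp, rfl⟩
              intro g' hg'
              simp only [List.head?_cons, Option.mem_some_iff] at hg'
              subst hg'
              exact hsrc e0 (by simp)
            · rwa [List.getLast?_cons_cons] at hlast
  · rintro ⟨es, ⟨hne, hch⟩, hlab, hsrc, e, hlast, hrng⟩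
    cases es with
    | nil => exact absurd rfl hne
    | cons f es' =>
        have hsf : G.src f ∈ G.relRange S [a] := hsrc f (by simp)
        obtain ⟨es0, ⟨hne0, _⟩, hlab0, hsrc0, e0, hl0, hr0⟩ := hsf
        obtain ⟨e0', rfl⟩ : ∃ e', es0 = [e'] := by
          cases es0 with
          | nil => exact absurd rfl hne0
          | cons g gs =>
              cases gs with
              | nil => exact ⟨g, rfl⟩
              | cons g' gs' => simp at hlab0
        simp only [List.getLast?_singleton, Option.mem_some_iff] at hl0
        subst hl0
        simp only [List.map_cons, List.map_nil, List.cons.injEq] at hlab0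
        refine ⟨e0' :: f :: es', ⟨by simp, List.isChain_cons_cons.mpr ⟨hr0, hch⟩⟩,
          by simp [hlab0.1, hlab], ?_, e, ?_, hrng⟩
        · intro g hg
          simp only [List.head?_cons, Option.mem_some_iff] at hg
          subst hg
          exact hsrc0 e0' (by simp)
        · rwa [List.getLast?_cons_cons]

lemma relRange_univ_singleton (X : Set (ℕ → A)) (a : A) :
    (shiftGraph X).relRange Set.univ [a] = cylSet X [a] [] := by
  rw [relRange_singleton]
  ext y
  simp only [Set.mem_setOf_eq, Set.mem_univ, and_true, cylSet]
  constructor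
  · rintro ⟨hy, hay⟩
    exact ⟨y, rfl, hy, hay⟩
  · rintro ⟨x, rfl, hy, hax⟩
    exact ⟨hy, hax⟩

lemma relRange_inter' (X : Set (ℕ → A)) (S T : Set (ℕ → A)) (a : A) :
    (shiftGraph X).relRange (S ∩ T) [a]
      = (shiftGraph X).relRange S [a] ∩ (shiftGraph X).relRange T [a] := by
  simp only [relRange_singleton]; ext y
  simp only [Set.mem_setOf_eq, Set.mem_inter_iff]; tauto

lemma relRange_union' (X : Set (ℕ → A)) (S T : Set (ℕ → A)) (a : A) :
    (shiftGraph X).relRange (S ∪ T) [a]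
      = (shiftGraph X).relRange S [a] ∪ (shiftGraph X).relRange T [a] := by
  simp only [relRange_singleton]; ext y
  simp only [Set.mem_setOf_eq, Set.mem_union]; tauto

lemma relRange_sdiff' (X : Set (ℕ → A)) (S T : Set (ℕ → A)) (a : A) :
    (shiftGraph X).relRange (S \ T) [a]
      = (shiftGraph X).relRange S [a] \ (shiftGraph X).relRange T [a] := by
  simp only [relRange_singleton]; ext y
  simp only [Set.mem_setOf_eq, Set.mem_diff]; tauto

/-- Single-letter step: `BX` is closed under `r(·, a)`. -/
lemma step_BX {X : Set (ℕ → A)} (hshift : ∀ x ∈ X, (fun n => x (n + 1)) ∈ X)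
    {S : Set (ℕ → A)} (hS : BX X S) (a : A) :
    BX X ((shiftGraph X).relRange S [a]) := by
  induction hS with
  | base u v =>
      cases v with
      | nil =>
          have : (shiftGraph X).relRange (cylSet X u []) [a] = cylSet X (u ++ [a]) [] := by
            rw [relRange_singleton]
            ext y
            simp only [Set.mem_setOf_eq, cylSet]
            constructor
            · rintro ⟨hy, hay, x, hx1, _, hux⟩
              have hx1' : scons a y = x := hx1
              refine ⟨y, rfl, hy, ?_⟩
              rw [wcons_append', wcons_cons', wcons_nil', hx1']
              exact hux
            · rintro ⟨x, hyx, hy, hux⟩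
              have hyx' : y = x := hyx
              subst hyx'
              rw [wcons_append', wcons_cons', wcons_nil'] at hux
              have haX : scons a y ∈ X := mem_of_wcons_mem hshift hux
              exact ⟨hy, haX, scons a y, rfl, haX, hux⟩
          rw [this]; exact BX.base _ _
      | cons b v' =>
          by_cases hba : b = a
          · subst hba
            have : (shiftGraph X).relRange (cylSet X u (b :: v')) [b]
                = cylSet X [b] [] ∩ cylSet X u v' := by
              rw [relRange_singleton]
              ext y
              simp only [Set.mem_setOf_eq, Set.mem_inter_iff, cylSet]
              constructor
              · rintro ⟨hy, hby, x, hx1, _, hux⟩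
                rw [wcons_cons'] at hx1
                have := scons_inj' hx1
                exact ⟨⟨y, rfl, hy, hby⟩, ⟨x, this, hy, hux⟩⟩
              · rintro ⟨⟨z, h1, hy, hby⟩, ⟨x, hyx, _, hux⟩⟩
                have h1' : y = z := h1
                subst h1'
                refine ⟨hy, hby, x, ?_, hby, hux⟩
                rw [wcons_cons', ← hyx]
            rw [this]; exact BX.inter (BX.base _ _) (BX.base _ _)
          · have : (shiftGraph X).relRange (cylSet X u (b :: v')) [a] = ∅ := by
              rw [relRange_singleton]
              ext y
              simp only [Set.mem_setOf_eq, Set.mem_empty_iff_false, iff_false]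
              rintro ⟨_, _, x, hx1, _, _⟩
              rw [wcons_cons'] at hx1
              exact hba (scons_zero_eq hx1).symm
            rw [this]; exact empty_mem_BX X
  | inter hS hT ihS ihT => rw [relRange_inter']; exact BX.inter ihS ihT
  | union hS hT ihS ihT => rw [relRange_union']; exact BX.union ihS ihT
  | sdiff hS hT ihS ihT => rw [relRange_sdiff']; exact BX.sdiff ihS ihT

lemma main_BX {X : Set (ℕ → A)} (hshift : ∀ x ∈ X, (fun n => x (n + 1)) ∈ X)
    (α : List A) : ∀ S : Set (ℕ → A), BX X S → BX X ((shiftGraph X).relRange S α) := by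
  induction α with
  | nil => intro S _; rw [relRange_nil]; exact empty_mem_BX X
  | cons a α ih =>
      intro S hS
      cases α with
      | nil => exact step_BX hshift hS a
      | cons b α' =>
          rw [relRange_cons _ _ _ _ (List.cons_ne_nil b α')]
          exact ih _ (step_BX hshift hS a)

end Aux

theorem stmt16 {A : Type*} [Fintype A] [TopologicalSpace A] [DiscreteTopology A]
    (X : Set (ℕ → A)) (hclosed : IsClosed X)
    (hshift : ∀ x ∈ X, (fun n => x (n + 1)) ∈ X) :
    (∀ S : Set (ℕ → A), BX X S → ∀ α : List A, (shiftGraph X).IsLabelledPath α →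
      BX X ((shiftGraph X).relRange S α)) ∧
    (∀ α : List A, (shiftGraph X).IsLabelledPath α →
      BX X ((shiftGraph X).relRange Set.univ α)) := by
  constructor
  · intro S hS α _
    exact main_BX hshift α S hS
  · intro α _
    cases α with
    | nil => rw [relRange_nil]; exact empty_mem_BX X
    | cons a α' =>
        cases α' with
        | nil => rw [relRange_univ_singleton]; exact BX.base _ _
        | cons b α'' =>
            rw [relRange_cons _ _ _ _ (List.cons_ne_nil b α''), relRange_univ_singleton]
            exact main_BX hshift _ _ (BX.base _ _)
end

section
/- Consider the labelled graph with vertices v₁, v₂, v₃, edges v₁ → v₂ and v₃ → v₂ both labelled a, and loops at v₁, v₂, v₃ each labelled b. Let B = {∅, {v₂}, {v₃}, {v₁,v₃}, {v₂,v₃}, {v₁,v₂,v₃}}. Then: (1) B is accommodating; (2) the labelled space (E, L, B) is weakly left-resolving; (3) it is regular; but (4) r({v₁,v₃} \ {v₃}, a) = {v₂} while r({v₁,v₃}, a) \ r({v₃}, a) = ∅, so the subtraction property r(A \ B, a) ⊆ r(A, a) \ r(B, a) fails. -/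
/-- The labelled graph with vertices `v₁ = 0`, `v₂ = 1`, `v₃ = 2`, edges `v₁ → v₂` and
`v₃ → v₂` labelled `a = true`, and loops at each vertex labelled `b = false`. -/
def exGraph : LabelledGraph (Fin 3) (Fin 5) Bool where
  src := ![0, 2, 0, 1, 2]
  rng := ![1, 1, 0, 1, 2]
  lab := ![true, true, false, false, false]

def exB : Set (Set (Fin 3)) := {∅, {1}, {2}, {0, 2}, {1, 2}, {0, 1, 2}}

namespace LabelledGraph

variable {V E A : Type*} (G : LabelledGraph V E A)

theorem isPath_cons_cons {e f : E} {es : List E} :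
    G.IsPath (e :: f :: es) ↔ G.rng e = G.src f ∧ G.IsPath (f :: es) :=
  ⟨fun h => ⟨(List.isChain_cons_cons.1 h.2).1, List.cons_ne_nil _ _,
      (List.isChain_cons_cons.1 h.2).2⟩,
    fun h => ⟨List.cons_ne_nil _ _, List.isChain_cons_cons.2 ⟨h.1, h.2.2⟩⟩⟩

theorem relRange_nil (S : Set V) : G.relRange S [] = ∅ := by
  ext w
  simp only [relRange, List.map_eq_nil_iff, Set.mem_ofPred_eq, Set.mem_empty_iff_false, iff_false]
  rintro ⟨es, hp, rfl, -⟩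
  exact hp.1 rfl

theorem IsLabelledPath.ne_nil {G : LabelledGraph V E A} {α : List A} (h : G.IsLabelledPath α) :
    α ≠ [] := by
  rintro rfl
  simp [IsLabelledPath, relRange_nil] at h

theorem mem_relRange_cons {S : Set V} {c : A} {α : List A} {w : V} :
    w ∈ G.relRange S (c :: α) ↔ ∃ e es, G.IsPath (e :: es) ∧ G.lab e = c ∧ es.map G.lab = α ∧
      G.src e ∈ S ∧ ∃ l ∈ (e :: es).getLast?, G.rng l = w := by
  constructor
  · rintro ⟨_ | ⟨e, es⟩, hp, hmap, hsrc, hw⟩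
    · exact absurd rfl hp.1
    · simp only [List.map_cons, List.cons.injEq] at hmap
      exact ⟨e, es, hp, hmap.1, hmap.2, hsrc e rfl, hw⟩
  · rintro ⟨e, es, hp, rfl, rfl, hsrc, hw⟩
    exact ⟨e :: es, hp, rfl, by simpa using hsrc, hw⟩

theorem relRange_singleton (S : Set V) (c : A) :
    G.relRange S [c] = G.rng '' {e | G.lab e = c ∧ G.src e ∈ S} := by
  ext w
  simp only [mem_relRange_cons, List.map_eq_nil_iff, Set.mem_image, Set.mem_ofPred_eq]
  constructor
  · rintro ⟨e, _, -, hc, rfl, hS, l, hl, rfl⟩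
    cases hl
    exact ⟨e, ⟨hc, hS⟩, rfl⟩
  · rintro ⟨e, ⟨hc, hS⟩, rfl⟩
    exact ⟨e, [], ⟨List.cons_ne_nil _ _, List.isChain_singleton _⟩, hc, rfl, hS, e, rfl, rfl⟩

theorem relRange_cons (S : Set V) (c : A) {α : List A} (hα : α ≠ []) :
    G.relRange S (c :: α) = G.relRange (G.relRange S [c]) α := by
  obtain ⟨d, α, rfl⟩ := List.exists_cons_of_ne_nil hα
  ext w
  simp only [mem_relRange_cons, relRange_singleton, Set.mem_image, Set.mem_ofPred_eq]
  constructor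
  · rintro ⟨e, _ | ⟨f, es⟩, hp, hc, hmap, hS, hw⟩
    · exact absurd hmap (List.cons_ne_nil _ _).symm
    · simp only [List.map_cons, List.cons.injEq] at hmap
      rw [isPath_cons_cons] at hp
      rw [List.getLast?_cons_cons] at hw
      exact ⟨f, es, hp.2, hmap.1, hmap.2, ⟨e, ⟨hc, hS⟩, hp.1⟩, hw⟩
  · rintro ⟨f, es, hp, hd, hmap, ⟨e, ⟨hc, hS⟩, he⟩, hw⟩
    refine ⟨e, f :: es, (G.isPath_cons_cons).2 ⟨he, hp⟩, hc, by simp [hd, hmap], hS, ?_⟩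
    rwa [List.getLast?_cons_cons]

/-- `r(s, c)` computed as a finset, so that relative ranges in a finite graph can be evaluated by
`decide`. -/
def rangeFinset [Fintype E] [DecidableEq V] [DecidableEq A] (s : Finset V) (c : A) : Finset V :=
  (Finset.univ.filter fun e => G.lab e = c ∧ G.src e ∈ s).image G.rng

theorem coe_rangeFinset [Fintype E] [DecidableEq V] [DecidableEq A] (s : Finset V) (c : A) :
    (G.rangeFinset s c : Set V) = G.relRange ↑s [c] := by
  simp [rangeFinset, relRange_singleton]

variable {G} {𝓑 : Set (Set V)}

theorem relRange_mem (hrange : ∀ S ∈ 𝓑, ∀ c, G.relRange S [c] ∈ 𝓑) {α : List A}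
    (hα : α ≠ []) {S : Set V} (hS : S ∈ 𝓑) : G.relRange S α ∈ 𝓑 := by
  induction α generalizing S with
  | nil => exact absurd rfl hα
  | cons c α ih =>
    rcases eq_or_ne α [] with rfl | hα'
    · exact hrange S hS c
    · rw [relRange_cons G S c hα']
      exact ih hα' (hrange S hS c)

theorem accommodating_of_singleton (huniv : Set.univ ∈ 𝓑)
    (hrange : ∀ S ∈ 𝓑, ∀ c, G.relRange S [c] ∈ 𝓑) (hinter : ∀ S ∈ 𝓑, ∀ T ∈ 𝓑, S ∩ T ∈ 𝓑)
    (hunion : ∀ S ∈ 𝓑, ∀ T ∈ 𝓑, S ∪ T ∈ 𝓑) : G.Accommodating 𝓑 :=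
  ⟨fun _ hS _ hα => relRange_mem hrange hα.ne_nil hS,
    fun _ hα => relRange_mem hrange hα.ne_nil huniv, hinter, hunion⟩

theorem weaklyLeftResolving_of_singleton (hrange : ∀ S ∈ 𝓑, ∀ c, G.relRange S [c] ∈ 𝓑)
    (hsingle : ∀ S ∈ 𝓑, ∀ T ∈ 𝓑, ∀ c,
      G.relRange (S ∩ T) [c] = G.relRange S [c] ∩ G.relRange T [c]) :
    G.WeaklyLeftResolving 𝓑 := by
  intro S hS T hT α hα
  replace hα := hα.ne_nil
  induction α generalizing S T with
  | nil => exact absurd rfl hα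
  | cons c α ih =>
    rcases eq_or_ne α [] with rfl | hα'
    · exact hsingle S hS T hT c
    · rw [relRange_cons G _ c hα', relRange_cons G _ c hα', relRange_cons G _ c hα',
        hsingle S hS T hT c]
      exact ih _ (hrange S hS c) _ (hrange T hT c) hα'

theorem mem_labelsFrom_iff_nonempty {b : A} (hb : ∀ S, G.relRange S [b] = S) {S : Set V} :
    b ∈ G.labelsFrom S ↔ S.Nonempty := by
  constructor
  · rintro ⟨e, hS, hb'⟩
    rw [← hb S, relRange_singleton]
    exact ⟨G.rng e, e, ⟨hb', hS⟩, rfl⟩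
  · rintro ⟨v, hv⟩
    rw [← hb S, relRange_singleton] at hv
    obtain ⟨e, ⟨hb', hS⟩, -⟩ := hv
    exact ⟨e, hS, hb'⟩

/-- `b` is emitted exactly from the nonempty sets, and `r(S, b) = S` recovers the set. -/
theorem regular_of_relRange_singleton_eq_self {b : A} (hb : ∀ S, G.relRange S [b] = S) :
    G.Regular 𝓑 := by
  intro S _ T _ hlab _ _ _ hrange
  rcases S.eq_empty_or_nonempty with rfl | hS
  · have hT : ¬ T.Nonempty := by
      rw [← mem_labelsFrom_iff_nonempty hb, ← hlab, mem_labelsFrom_iff_nonempty hb]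
      exact Set.not_nonempty_empty
    exact (Set.not_nonempty_iff_eq_empty.mp hT).symm
  · rw [← hb S, ← hb T]
    exact hrange b ((mem_labelsFrom_iff_nonempty hb).mpr hS)

end LabelledGraph

def exBFinset : Finset (Finset (Fin 3)) := {∅, {1}, {2}, {0, 2}, {1, 2}, {0, 1, 2}}

theorem exB_eq_image :
    exB = (fun s : Finset (Fin 3) => (s : Set (Fin 3))) '' ↑exBFinset := by
  simp [exB, exBFinset, Set.image_insert_eq]

theorem forall_mem_exB {P : Set (Fin 3) → Prop} :
    (∀ S ∈ exB, P S) ↔ ∀ s ∈ exBFinset, P ↑s := by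
  rw [exB_eq_image, Set.forall_mem_image]
  rfl

theorem coe_mem_exB {s : Finset (Fin 3)} : (s : Set (Fin 3)) ∈ exB ↔ s ∈ exBFinset := by
  rw [exB_eq_image, Finset.coe_injective.mem_set_image, Finset.mem_coe]

theorem univ_mem_exB : Set.univ ∈ exB := by
  rw [← Finset.coe_univ, coe_mem_exB]
  decide

theorem inter_mem_exB : ∀ S ∈ exB, ∀ T ∈ exB, S ∩ T ∈ exB := by
  simp only [forall_mem_exB, ← Finset.coe_inter, coe_mem_exB]
  decide

theorem union_mem_exB : ∀ S ∈ exB, ∀ T ∈ exB, S ∪ T ∈ exB := by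
  simp only [forall_mem_exB, ← Finset.coe_union, coe_mem_exB]
  decide

theorem exGraph_relRange_mem : ∀ S ∈ exB, ∀ c, exGraph.relRange S [c] ∈ exB := by
  simp only [forall_mem_exB, ← LabelledGraph.coe_rangeFinset, coe_mem_exB]
  decide

theorem exGraph_relRange_inter : ∀ S ∈ exB, ∀ T ∈ exB, ∀ c,
    exGraph.relRange (S ∩ T) [c] = exGraph.relRange S [c] ∩ exGraph.relRange T [c] := by
  simp only [forall_mem_exB, ← Finset.coe_inter, ← LabelledGraph.coe_rangeFinset, Finset.coe_inj]
  decide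

theorem exGraph_relRange_false (S : Set (Fin 3)) : exGraph.relRange S [false] = S := by
  obtain ⟨s, rfl⟩ := S.toFinite.exists_finset_coe
  rw [← LabelledGraph.coe_rangeFinset, Finset.coe_inj]
  revert s
  decide

theorem stmt17 :
    exGraph.Accommodating exB ∧
    exGraph.WeaklyLeftResolving exB ∧
    exGraph.Regular exB ∧
    exGraph.relRange (({0, 2} : Set (Fin 3)) \ {2}) [true] = {1} ∧
    exGraph.relRange {0, 2} [true] \ exGraph.relRange {2} [true] = ∅ := by
  refine ⟨exGraph.accommodating_of_singleton univ_mem_exB exGraph_relRange_mem inter_mem_exB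
      union_mem_exB,
    exGraph.weaklyLeftResolving_of_singleton exGraph_relRange_mem exGraph_relRange_inter,
    exGraph.regular_of_relRange_singleton_eq_self exGraph_relRange_false, ?_, ?_⟩
  all_goals
    simp only [← Finset.coe_singleton, ← Finset.coe_insert, ← Finset.coe_sdiff,
      ← LabelledGraph.coe_rangeFinset, ← Finset.coe_empty, Finset.coe_inj]
    decide
end
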